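/- Let a ∈ ℝˢ and ℓ ≥ 1, and define ω : (ℝˢ)^ℓ → ℝ by ω(X) := min_{1 ≤ j ≤ ℓ} ‖x_j − a‖² for X = (x_1,…,x_ℓ). Fix X ∈ (ℝˢ)^ℓ and let j₀ be any index attaining the minimum, i.e., ω(X) = ‖x_{j₀} − a‖². Define ξ ∈ (ℝˢ)^ℓ by ξ_{j₀} := 2(x_{j₀} − a) and ξ_j := 0 for j ≠ j₀. Then for all Y = (y_1,…,y_ℓ) ∈ (ℝˢ)^ℓ, ω(Y) ≤ ω(X) + ⟨ξ, Y − X⟩ + ‖Y − X‖², where ⟨·,·⟩ and ‖·‖ are the inner product and norm of the product Euclidean space (ℝˢ)^ℓ. In particular, ω is 1-upper-C². -/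

import Mathlib

open scoped BigOperators RealInnerProductSpace

/-- The per-data-point clustering objective: squared distance from the data point `a` to its
nearest centroid among `X = (x_1, …, x_ℓ)`.  The space of centroid collections is the
product Euclidean space `(ℝˢ)^ℓ` (with the `ℓ²` product norm). -/
noncomputable def clusterObj {s ℓ : ℕ} (a : EuclideanSpace ℝ (Fin s))
    (X : PiLp 2 fun _ : Fin ℓ => EuclideanSpace ℝ (Fin s)) : ℝ :=
  ⨅ j : Fin ℓ, ‖X j - a‖ ^ 2

/-! The infimum defining `ω` is attained at `j₀`, and each `Y ↦ ‖y_{j₀} − a‖²` is a quadratic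
whose second-order term `‖y_{j₀} − x_{j₀}‖²` is at most `‖Y − X‖²`; so `ω` lies below a
function that touches it at `X` and satisfies the `1`-descent inequality there with gradient `ξ`. -/

theorem sq_norm_sub_eq_inner_add {E : Type*} [NormedAddCommGroup E] [InnerProductSpace ℝ E]
    (x y a : E) : ‖y - a‖ ^ 2 = ‖x - a‖ ^ 2 + ⟪(2 : ℝ) • (x - a), y - x⟫ + ‖y - x‖ ^ 2 := by
  rw [show y - a = (x - a) + (y - x) by abel, norm_add_sq_real, real_inner_smul_left]

namespace PiLp

variable {ι : Type*} [Fintype ι] {β : ι → Type*}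

theorem sq_norm_apply_le [∀ i, SeminormedAddCommGroup (β i)] (x : PiLp 2 β) (i : ι) :
    ‖x i‖ ^ 2 ≤ ‖x‖ ^ 2 :=
  pow_le_pow_left₀ (norm_nonneg _) (norm_apply_le x i) 2

variable [DecidableEq ι] [∀ i, NormedAddCommGroup (β i)] [∀ i, InnerProductSpace ℝ (β i)]

theorem inner_single_left (i : ι) (v : β i) (x : PiLp 2 β) :
    ⟪single 2 i v, x⟫ = ⟪v, x i⟫ := by
  rw [PiLp.inner_apply, Finset.sum_eq_single i]
  · rw [single_eq_same]
  · intro j _ hj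
    rw [single_eq_of_ne _ hj, inner_zero_left]
  · simp

theorem sq_norm_apply_sub_le (X Y : PiLp 2 β) (i : ι) (a : β i) :
    ‖Y i - a‖ ^ 2 ≤ ‖X i - a‖ ^ 2 + ⟪single 2 i ((2 : ℝ) • (X i - a)), Y - X⟫ + ‖Y - X‖ ^ 2 := by
  rw [sq_norm_sub_eq_inner_add (X i) (Y i) a, inner_single_left]
  simpa using sq_norm_apply_le (Y - X) i

end PiLp

theorem clusterObj_le {s ℓ : ℕ} (a : EuclideanSpace ℝ (Fin s))
    (Y : PiLp 2 fun _ : Fin ℓ => EuclideanSpace ℝ (Fin s)) (j : Fin ℓ) :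
    clusterObj a Y ≤ ‖Y j - a‖ ^ 2 :=
  ciInf_le (Finite.bddBelow_range _) j

theorem clusterObj_descent_general {s ℓ : ℕ} (a : EuclideanSpace ℝ (Fin s))
    (X : PiLp 2 fun _ : Fin ℓ => EuclideanSpace ℝ (Fin s))
    (j₀ : Fin ℓ) (hj₀ : clusterObj a X = ‖X j₀ - a‖ ^ 2)
    (ξ : PiLp 2 fun _ : Fin ℓ => EuclideanSpace ℝ (Fin s))
    (hξ : ξ = fun j => if j = j₀ then (2 : ℝ) • (X j₀ - a) else 0) :
    ∀ Y : PiLp 2 fun _ : Fin ℓ => EuclideanSpace ℝ (Fin s),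
      clusterObj a Y ≤ clusterObj a X + ⟪ξ, Y - X⟫ + ‖Y - X‖ ^ 2 := by
  intro Y
  have hξ_single : ξ = PiLp.single 2 j₀ ((2 : ℝ) • (X j₀ - a)) := by
    ext1 j
    rw [hξ, PiLp.ofLp_single, Pi.single_apply]
  rw [hj₀, hξ_single]
  exact (clusterObj_le a Y j₀).trans (PiLp.sq_norm_apply_sub_le X Y j₀ a)

/-- The clustering objective `ω` is `1`-upper-`C²`: at any `X`, with `j₀` an index attaining
the minimum, the vector `ξ` having `2(x_{j₀} − a)` in position `j₀` and `0` elsewhere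
satisfies the `1`-descent inequality `ω(Y) ≤ ω(X) + ⟪ξ, Y − X⟫ + ‖Y − X‖²` for all `Y`. -/
theorem clusterObj_descent {s ℓ : ℕ} (hℓ : 1 ≤ ℓ) (a : EuclideanSpace ℝ (Fin s))
    (X : PiLp 2 fun _ : Fin ℓ => EuclideanSpace ℝ (Fin s))
    (j₀ : Fin ℓ) (hj₀ : clusterObj a X = ‖X j₀ - a‖ ^ 2)
    (ξ : PiLp 2 fun _ : Fin ℓ => EuclideanSpace ℝ (Fin s))
    (hξ : ξ = fun j => if j = j₀ then (2 : ℝ) • (X j₀ - a) else 0) :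
    ∀ Y : PiLp 2 fun _ : Fin ℓ => EuclideanSpace ℝ (Fin s),
      clusterObj a Y ≤ clusterObj a X + ⟪ξ, Y - X⟫ + ‖Y - X‖ ^ 2 :=
  clusterObj_descent_general a X j₀ hj₀ ξ hξ
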